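/- Assume: (a) there is a computable function ψ from (codes of) finite simple graphs to ℤ ∪ {+∞} such that for every G, the independence complex I_G is simply connected if and only if ψ(G) ≥ 1 or I_G is contractible, and contractibility-or-(ψ(G) ≥ 1) is decidable; (b) every finite simplicial complex K can be computably realized as the independence complex of a graph (up to homeomorphism via barycentric subdivision). Then simple connectivity of finite simplicial complexes is decidable. Combined with the undecidability of simple connectivity, no such ψ with property (a) can exist; in particular the Aharoni–Berger–Ziv conjecture (that I_G is not (ψ(G)+1)-connected unless contractible) is false. -/
import Mathlib


/-- A finite simple graph with vertices in `ℕ`: an irreflexive symmetric edge relation,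
recorded as a finite set of ordered pairs. -/
structure FinGraph where
  verts : Finset ℕ
  edges : Finset (ℕ × ℕ)
  symm : ∀ p ∈ edges, (p.2, p.1) ∈ edges
  loopless : ∀ p ∈ edges, p.1 ≠ p.2
  mem_verts : ∀ p ∈ edges, p.1 ∈ verts ∧ p.2 ∈ verts

/-- `G − e` : delete the edge `e` (both orientations), keeping all vertices. -/
def FinGraph.delEdge (G : FinGraph) (e : ℕ × ℕ) : FinGraph where
  verts := G.verts
  edges := G.edges.filter fun p => p ≠ e ∧ p ≠ (e.2, e.1)
  symm := by
    intro p hp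
    simp only [Finset.mem_filter] at hp ⊢
    refine ⟨G.symm p hp.1, fun h => hp.2.2 ?_, fun h => hp.2.1 ?_⟩ <;>
    · obtain ⟨p1, p2⟩ := p
      obtain ⟨e1, e2⟩ := e
      simp only [Prod.ext_iff] at h ⊢
      exact ⟨h.2, h.1⟩
  loopless := by
    intro p hp
    exact G.loopless p (Finset.mem_filter.mp hp).1
  mem_verts := by
    intro p hp
    exact G.mem_verts p (Finset.mem_filter.mp hp).1

/-- The vertices of `G ∖ e` : vertices distinct from and non-adjacent to both endpoints. -/
def FinGraph.exclVerts (G : FinGraph) (e : ℕ × ℕ) : Finset ℕ :=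
  G.verts.filter fun w => w ≠ e.1 ∧ w ≠ e.2 ∧ (w, e.1) ∉ G.edges ∧ (w, e.2) ∉ G.edges

/-- `G ∖ e` : induced subgraph on the vertices distinct from and non-adjacent to both
endpoints of `e`. -/
def FinGraph.exclEdge (G : FinGraph) (e : ℕ × ℕ) : FinGraph where
  verts := G.exclVerts e
  edges := G.edges.filter fun p => p.1 ∈ G.exclVerts e ∧ p.2 ∈ G.exclVerts e
  symm := by
    intro p hp
    simp only [Finset.mem_filter] at hp ⊢
    exact ⟨G.symm p hp.1, hp.2.2, hp.2.1⟩
  loopless := by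
    intro p hp
    exact G.loopless p (Finset.mem_filter.mp hp).1
  mem_verts := by
    intro p hp
    exact (Finset.mem_filter.mp hp).2

/-- The defining recursion for the Aharoni–Berger–Ziv invariant `ψ`, with values in
`ℤ ∪ {+∞}`. -/
def FinGraph.IsPsi (ψ : FinGraph → WithTop ℤ) : Prop :=
  (∀ G : FinGraph, G.verts = ∅ → ψ G = ((-2 : ℤ) : WithTop ℤ)) ∧
  (∀ G : FinGraph, G.verts ≠ ∅ → G.edges = ∅ → ψ G = ⊤) ∧
  (∀ (G : FinGraph) (h : G.edges.Nonempty),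
    ψ G = G.edges.sup' h fun e => min (ψ (G.delEdge e)) (ψ (G.exclEdge e) + 1))
/-- The independent sets of a `FinGraph`: nonempty vertex sets containing no edge. -/
def FinGraph.indepSets (G : FinGraph) : Set (Finset ℕ) :=
  {S | S.Nonempty ∧ (↑S : Set ℕ) ⊆ ↑G.verts ∧ ∀ u ∈ S, ∀ v ∈ S, (u, v) ∉ G.edges}

/-- Geometric realization of a family of finite subsets of `ℕ` inside `ℕ → ℝ`. -/
def realizeSets (F : Set (Finset ℕ)) : Set (ℕ → ℝ) :=
  {f | ∃ s ∈ F, (∀ v, 0 ≤ f v) ∧ (∀ v, v ∉ s → f v = 0) ∧ ∑ v ∈ s, f v = 1}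
/-- A finite family of finite sets is (the set of faces of) a finite abstract
simplicial complex. -/
def IsComplex (K : Finset (Finset ℕ)) : Prop :=
  (∀ s ∈ K, s.Nonempty) ∧ (∀ s ∈ K, ∀ t ⊆ s, t.Nonempty → t ∈ K)

/-- `I_G` is simply connected. -/
def GraphSC (G : FinGraph) : Prop := SimplyConnectedSpace ↥(realizeSets G.indepSets)

/-- `I_G` is contractible. -/
def GraphContr (G : FinGraph) : Prop := ContractibleSpace ↥(realizeSets G.indepSets)

/-- Hypothesis (a): a computable invariant `ψ` satisfying the defining recursion, such
that `I_G` is simply connected iff `ψ(G) ≥ 1` or `I_G` is contractible, with the latter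
disjunction decidable. -/
def PropA (ψ : FinGraph → WithTop ℤ) : Prop :=
  FinGraph.IsPsi ψ ∧
  (∃ g : Finset ℕ × Finset (ℕ × ℕ) → Bool, Computable g ∧
    ∀ G : FinGraph,
      (g (G.verts, G.edges) = true ↔ (((1 : ℤ) : WithTop ℤ) ≤ ψ G ∨ GraphContr G))) ∧
  (∀ G : FinGraph, GraphSC G ↔ (((1 : ℤ) : WithTop ℤ) ≤ ψ G ∨ GraphContr G))

/-- Hypothesis (b): every finite simplicial complex can be computably realized (up to
simple connectivity) as the independence complex of a finite graph. -/
def PropB : Prop :=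
  ∃ h : Finset (Finset ℕ) → Finset ℕ × Finset (ℕ × ℕ), Computable h ∧
    ∀ K : Finset (Finset ℕ), IsComplex K →
      ∃ G : FinGraph, h K = (G.verts, G.edges) ∧
        (GraphSC G ↔ SimplyConnectedSpace ↥(realizeSets (↑K : Set (Finset ℕ))))

/-- Simple connectivity of finite simplicial complexes is decidable. -/
def SCDecidable : Prop :=
  ∃ D : Finset (Finset ℕ) → Bool, Computable D ∧
    ∀ K : Finset (Finset ℕ), IsComplex K →
      (D K = true ↔ SimplyConnectedSpace ↥(realizeSets (↑K : Set (Finset ℕ))))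

/-- Given (a) and (b), simple connectivity of finite simplicial
complexes is decidable; hence, by its undecidability, no such `ψ` with property (a)
exists — in particular the Aharoni–Berger–Ziv conjecture is false. -/
theorem abz_conjecture_contradiction :
    ((∃ ψ : FinGraph → WithTop ℤ, PropA ψ) → PropB → SCDecidable) ∧
    (¬ SCDecidable → PropB → ¬ ∃ ψ : FinGraph → WithTop ℤ, PropA ψ) := by
  have main : (∃ ψ : FinGraph → WithTop ℤ, PropA ψ) → PropB → SCDecidable := by
    rintro ⟨ψ, _, ⟨g, hg, hgspec⟩, hiff⟩ ⟨h, hh, hhspec⟩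
    refine ⟨fun K => g (h K), hg.comp hh, fun K hK => ?_⟩
    obtain ⟨G, hG, hGsc⟩ := hhspec K hK
    simp only []
    rw [hG, hgspec G, ← hiff G, hGsc]
  exact ⟨main, fun hnd hb ⟨ψ, hψ⟩ => hnd (main ⟨ψ, hψ⟩ hb)⟩
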